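/- arXiv:1908.01455 — 8 statements merged into one kernel-verified Lean document; each statement's English description precedes it below -/
import Mathlib

section
/- Let R and S be disjoint finite sets with |R| = f₂ and |S| = nf₂ ≥ 1, and let M be a multiset of messages, each assigned a receiver in R ∪ S, such that every element of R receives at least as many messages as every element of S (R is the set of top-f₂ receivers). Let q = (f₁+1) / nf₂ and r = (f₁+1) mod nf₂, and suppose the total number of messages |M| ≤ q·(f₂+nf₂) + r + f₂·sgn(r) − 1. Then the number of messages received by elements of S is at most f₁. -/
/-!
If the non-faulty receivers `S` got at least `k = f₁ + 1` messages, then by pigeonhole one of them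
got at least `c = ⌈k / nf₂⌉ = q + sgn r`, hence so did each of the `f₂` top receivers in `R`.
At least `f₂ c + k = q (f₂ + nf₂) + r + f₂ sgn r` messages were then sent, one more than allowed.
-/

open Finset

lemma Multiset.card_filter_mem_eq_sum_count {ι : Type*} [DecidableEq ι] (M : Multiset ι)
    (T : Finset ι) : Multiset.card (M.filter (· ∈ T)) = ∑ y ∈ T, M.count y := by
  rw [← Multiset.sum_count_eq_card fun a ha => (Multiset.mem_filter.1 ha).2]
  exact sum_congr rfl fun y hy => Multiset.count_filter_of_pos hy

lemma Multiset.card_eq_sum_count_add_sum_count {ι : Type*} [DecidableEq ι] {M : Multiset ι}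
    {R S : Finset ι} (hdisj : Disjoint R S) (hM : ∀ x ∈ M, x ∈ R ∪ S) :
    Multiset.card M = ∑ x ∈ R, M.count x + ∑ y ∈ S, M.count y := by
  rw [← sum_union hdisj, Multiset.sum_count_eq_card hM]

lemma Finset.exists_le_of_card_mul_pred_lt_sum {α : Type*} (s : Finset α) (f : α → ℕ) (c : ℕ)
    (h : #s * (c - 1) < ∑ i ∈ s, f i) : ∃ i ∈ s, c ≤ f i := by
  rw [← smul_eq_mul, ← sum_const] at h
  obtain ⟨i, hi, hlt⟩ := exists_lt_of_sum_lt h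
  exact ⟨i, hi, by omega⟩

lemma Nat.mul_pred_ceil_lt {k : ℕ} (n : ℕ) (hk : 0 < k) :
    n * (k / n + (if 0 < k % n then 1 else 0) - 1) < k := by
  have hdiv := Nat.div_add_mod k n
  split_ifs with hr
  · rw [Nat.add_sub_cancel]; omega
  · have hmod : k % n = 0 := by omega
    have hn : 0 < n := Nat.pos_of_ne_zero fun h => by simp [h] at hmod; omega
    rw [hmod, Nat.add_zero] at hdiv
    rw [Nat.add_zero, Nat.mul_sub_one]
    omega

theorem stmt_1_general {ι : Type*} [DecidableEq ι] (f₁ f₂ nf₂ : ℕ)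
    (R S : Finset ι) (hdisj : Disjoint R S) (hR : R.card = f₂) (hS : S.card = nf₂)
    (M : Multiset ι) (hM : ∀ x ∈ M, x ∈ R ∪ S)
    (htop : ∀ x ∈ R, ∀ y ∈ S, M.count y ≤ M.count x)
    (q r : ℕ) (hq : q = (f₁ + 1) / nf₂) (hr : r = (f₁ + 1) % nf₂)
    (hcard : Multiset.card M ≤ q * (f₂ + nf₂) + r + f₂ * (if 0 < r then 1 else 0) - 1) :
    Multiset.card (M.filter (· ∈ S)) ≤ f₁ := by
  by_contra! hS_many
  set c := q + (if 0 < r then 1 else 0) with hc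
  have hS_sum : f₁ + 1 ≤ ∑ y ∈ S, M.count y := by
    rwa [← Multiset.card_filter_mem_eq_sum_count]
  obtain ⟨y, hy, hcy⟩ : ∃ y ∈ S, c ≤ M.count y := by
    refine S.exists_le_of_card_mul_pred_lt_sum _ c (lt_of_lt_of_le ?_ hS_sum)
    rw [hS, hc, hq, hr]
    exact Nat.mul_pred_ceil_lt nf₂ (Nat.succ_pos f₁)
  have hR_sum : f₂ * c ≤ ∑ x ∈ R, M.count x := by
    simpa [hR] using R.card_nsmul_le_sum _ c fun x hx => hcy.trans (htop x hx y hy)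
  have hbound : q * (f₂ + nf₂) + r + f₂ * (if 0 < r then 1 else 0) = f₂ * c + (f₁ + 1) := by
    rw [hc, ← Nat.div_add_mod (f₁ + 1) nf₂, ← hq, ← hr]
    ring
  have htotal := Multiset.card_eq_sum_count_add_sum_count hdisj hM
  omega

/-- key counting step of Theorem 4.1. -/
theorem stmt_1 {ι : Type*} [DecidableEq ι] (f₁ f₂ nf₂ : ℕ) (hnf : 1 ≤ nf₂)
    (R S : Finset ι) (hdisj : Disjoint R S) (hR : R.card = f₂) (hS : S.card = nf₂)
    (M : Multiset ι) (hM : ∀ x ∈ M, x ∈ R ∪ S)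
    (htop : ∀ x ∈ R, ∀ y ∈ S, M.count y ≤ M.count x)
    (q r : ℕ) (hq : q = (f₁ + 1) / nf₂) (hr : r = (f₁ + 1) % nf₂)
    (hcard : Multiset.card M ≤ q * (f₂ + nf₂) + r + f₂ * (if 0 < r then 1 else 0) - 1) :
    Multiset.card (M.filter (· ∈ S)) ≤ f₁ :=
  stmt_1_general f₁ f₂ nf₂ R S hdisj hR hS M hM htop q r hq hr hcard
end

section
/- Let n₂ = f₂ + nf₂ with nf₂ ≥ 1, let β ≥ 1, q = β / nf₂, r = β mod nf₂, and α = q·n₂ + r + f₂·sgn(r). Suppose 𝒫 is a set of α senders partitioned into q blocks of size n₂ and one block of size r + f₂·sgn(r), and each block P is assigned an injection b_P into a set of n₂ receivers of which at most f₂ are faulty, the injections having pairwise disjoint images covering each block. If for each block at most f₂ (resp. at most f₂·sgn(r) for the remainder block) of its senders map to faulty receivers, then the number of senders mapping to non-faulty receivers is at least β. -/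
/-!
Each full block loses at most `f₂` of its `f₂ + nf₂` senders and the remainder block loses at
most `f₂ · sgn r` of its `r + f₂ · sgn r`, so they deliver at least `nf₂` and `r` messages
respectively. The blocks are disjoint, so at least `q · nf₂ + r = β` messages are delivered.
-/

open Finset

namespace Finset

variable {ι α : Type*} {p : α → Prop} [DecidablePred p]

theorem le_card_filter_not_of_card_filter_le {s : Finset α} {m k : ℕ}
    (hs : #s = m + k) (hp : #(s.filter p) ≤ k) : m ≤ #(s.filter fun x => ¬p x) := by
  have := card_filter_add_card_filter_not (s := s) p
  omega

theorem sum_le_card_filter_biUnion [DecidableEq α] {s : Finset ι} {t : ι → Finset α}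
    (ht : (s : Set ι).PairwiseDisjoint t) {g : ι → ℕ}
    (hg : ∀ i ∈ s, g i ≤ #((t i).filter p)) : ∑ i ∈ s, g i ≤ #((s.biUnion t).filter p) := by
  rw [filter_biUnion, card_biUnion fun i hi j hj hij =>
    (ht hi hj hij).mono (filter_subset _ _) (filter_subset _ _)]
  exact sum_le_sum hg

end Finset

theorem stmt_9_general {ι κ : Type*} [DecidableEq ι] [DecidableEq κ]
    (f₂ nf₂ β : ℕ)
    (q r : ℕ) (hq : q = β / nf₂) (hr : r = β % nf₂)
    (P : Finset ι)
    (blocks : Fin (q + 1) → Finset ι)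
    (hdisj : ∀ i j, i ≠ j → Disjoint (blocks i) (blocks j))
    (hunion : Finset.univ.biUnion blocks = P)
    (hsize : ∀ i : Fin (q + 1), (i : ℕ) < q → (blocks i).card = f₂ + nf₂)
    (hlast : (blocks (Fin.last q)).card = r + f₂ * (if 0 < r then 1 else 0))
    (b : ι → κ) (Fty : Finset κ)
    (hloss : ∀ i : Fin (q + 1), (i : ℕ) < q →
      ((blocks i).filter (fun x => b x ∈ Fty)).card ≤ f₂)
    (hlossLast : ((blocks (Fin.last q)).filter (fun x => b x ∈ Fty)).card ≤
      f₂ * (if 0 < r then 1 else 0)) :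
    β ≤ (P.filter (fun x => b x ∉ Fty)).card := by
  let delivered : Fin (q + 1) → ℕ := Fin.lastCases r fun _ => nf₂
  have hdelivered : ∀ i ∈ univ, delivered i ≤ #((blocks i).filter fun x => b x ∉ Fty) := by
    intro i _
    induction i using Fin.lastCases with
    | last => simpa [delivered] using le_card_filter_not_of_card_filter_le hlast hlossLast
    | cast j =>
      simpa [delivered] using le_card_filter_not_of_card_filter_le
        ((hsize _ j.castSucc_lt_last).trans (add_comm _ _)) (hloss _ j.castSucc_lt_last)
  calc β = ∑ i, delivered i := by
        simp [delivered, Fin.sum_univ_castSucc, hq, hr, mul_comm, Nat.div_add_mod]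
    _ ≤ _ := hunion ▸ sum_le_card_filter_biUnion (fun i _ j _ hij => hdisj i j hij) hdelivered

/-- counting inequality of Proposition 6.3 (SPBS). -/
theorem stmt_9 {ι κ : Type*} [DecidableEq ι] [DecidableEq κ]
    (f₂ nf₂ β : ℕ) (hnf : 1 ≤ nf₂) (hβ : 1 ≤ β)
    (q r : ℕ) (hq : q = β / nf₂) (hr : r = β % nf₂)
    (P : Finset ι)
    (hP : P.card = q * (f₂ + nf₂) + r + f₂ * (if 0 < r then 1 else 0))
    (blocks : Fin (q + 1) → Finset ι)
    (hdisj : ∀ i j, i ≠ j → Disjoint (blocks i) (blocks j))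
    (hunion : Finset.univ.biUnion blocks = P)
    (hsize : ∀ i : Fin (q + 1), (i : ℕ) < q → (blocks i).card = f₂ + nf₂)
    (hlast : (blocks (Fin.last q)).card = r + f₂ * (if 0 < r then 1 else 0))
    (b : ι → κ) (Fty : Finset κ)
    (hloss : ∀ i : Fin (q + 1), (i : ℕ) < q →
      ((blocks i).filter (fun x => b x ∈ Fty)).card ≤ f₂)
    (hlossLast : ((blocks (Fin.last q)).filter (fun x => b x ∈ Fty)).card ≤
      f₂ * (if 0 < r then 1 else 0)) :
    β ≤ (P.filter (fun x => b x ∉ Fty)).card :=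
  stmt_9_general f₂ nf₂ β q r hq hr P blocks hdisj hunion hsize hlast b Fty hloss hlossLast
end

section
/- Let f₁ ≥ 0, β ≥ 1 with β = nf₁ − f₁ (so nf₁ = β + f₁), let q = (f₂+1)/β and r = (f₂+1) mod β. If a set T of receivers satisfies |T| ≥ (f₂+1) + q·f₁ + f₁·sgn(r) and at most f₂ elements of T are faulty, and T is covered by q + sgn(r) blocks, then the non-faulty part of T has size at least (q + sgn(r))·f₁ + 1, and hence by pigeonhole some block contains at least f₁ + 1 non-faulty elements of T. -/
open Finset

theorem Finset.exists_lt_card_inter_of_mul_lt_card {ι κ : Type*} [Fintype ι] [DecidableEq κ]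
    {s : Finset κ} {t : ι → Finset κ} {n : ℕ} (hs : s ⊆ univ.biUnion t)
    (hn : Fintype.card ι * n < #s) : ∃ i, n < #(s ∩ t i) := by
  have hcover : s ⊆ univ.biUnion fun i ↦ s ∩ t i := by
    rw [← inter_biUnion]
    exact subset_inter subset_rfl hs
  have hsum : ∑ _i : ι, n < ∑ i, #(s ∩ t i) := calc
    ∑ _i : ι, n = Fintype.card ι * n := by simp
    _ < #s := hn
    _ ≤ #(univ.biUnion fun i ↦ s ∩ t i) := card_le_card hcover
    _ ≤ ∑ i, #(s ∩ t i) := card_biUnion_le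
  obtain ⟨i, -, hi⟩ := exists_lt_of_sum_lt hsum
  exact ⟨i, hi⟩

theorem stmt_11_general {κ : Type*} [DecidableEq κ] (f₁ f₂ : ℕ)
    (q r : ℕ)
    (T F : Finset κ)
    (hT : (f₂ + 1) + q * f₁ + f₁ * (if 0 < r then 1 else 0) ≤ T.card)
    (hf : F.card ≤ f₂)
    (blocks : Fin (q + (if 0 < r then 1 else 0)) → Finset κ)
    (hcover : T ⊆ Finset.univ.biUnion blocks) :
    (q + (if 0 < r then 1 else 0)) * f₁ + 1 ≤ (T \ F).card ∧
      ∃ i, f₁ + 1 ≤ ((T \ F) ∩ blocks i).card := by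
  have hnonfaulty : (q + (if 0 < r then 1 else 0)) * f₁ + 1 ≤ #(T \ F) := by
    have := le_card_sdiff F T
    rw [mul_comm f₁] at hT
    rw [add_mul]
    omega
  exact ⟨hnonfaulty, exists_lt_card_inter_of_mul_lt_card (sdiff_subset.trans hcover)
    (by rwa [Fintype.card_fin, Nat.lt_iff_add_one_le])⟩

/-- counting and pigeonhole step in Proposition 6.4 case 2 (RPBS-brs). -/
theorem stmt_11 {κ : Type*} [DecidableEq κ] (f₁ f₂ nf₁ β : ℕ)
    (hβ : 1 ≤ β) (hβeq : β = nf₁ - f₁) (hnf : nf₁ = β + f₁)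
    (q r : ℕ) (hq : q = (f₂ + 1) / β) (hr : r = (f₂ + 1) % β)
    (T F : Finset κ)
    (hT : (f₂ + 1) + q * f₁ + f₁ * (if 0 < r then 1 else 0) ≤ T.card)
    (hF : F ⊆ T) (hf : F.card ≤ f₂)
    (blocks : Fin (q + (if 0 < r then 1 else 0)) → Finset κ)
    (hcover : T ⊆ Finset.univ.biUnion blocks) :
    (q + (if 0 < r then 1 else 0)) * f₁ + 1 ≤ (T \ F).card ∧
      ∃ i, f₁ + 1 ≤ ((T \ F) ∩ blocks i).card :=
  stmt_11_general f₁ f₂ q r T F hT hf blocks hcover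
end

section
/- Let n₁ = f₁ + nf₁, n₂ = f₂ + nf₂ with nf₂ ≥ 1 and n₁ ≥ n₂. Let q = (f₁+1)/nf₂, r = (f₁+1) mod nf₂, σ₁ = q·n₂ + r + f₂·sgn(r). Then for every multiset M of sender–receiver pairs (senders among the n₁ replicas, receivers among the n₂ replicas) with |M| = σ₁ − 1, there exist a set F₂ of f₂ receivers and a set F₁ of at most f₁ senders such that every pair in M has its receiver in F₂ or its sender in F₁. -/
/-!
Count the messages received by each receiver and let the adversary crash the `f₂` receivers
with the most messages. Writing `k = f₁ / nf₂`, one has `σ₁ = f₁ + 1 + f₂ (k + 1)`. If more than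
`f₁` of the `σ₁ - 1` messages reached the `nf₂` surviving receivers, one of them would receive
more than `k`, so each crashed receiver would too, and there would be at least `σ₁` messages.
Hence at most `f₁` messages reach surviving receivers, and crashing their senders isolates them.
-/

theorem Nat.succ_div_add_ite_mod_pos (a m : ℕ) :
    (a + 1) / m + (if 0 < (a + 1) % m then 1 else 0) = a / m + 1 := by
  have hdvd : m ∣ a + 1 ↔ ¬0 < (a + 1) % m := by
    rw [Nat.dvd_iff_mod_eq_zero]; omega
  rw [Nat.succ_div]
  by_cases h : m ∣ a + 1
  · rw [if_pos h, if_neg (hdvd.mp h)]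
  · rw [if_neg h, if_pos (not_not.mp (mt hdvd.mpr h))]

namespace Finset

variable {κ : Type*} [DecidableEq κ]

theorem exists_subset_card_eq_forall_sdiff_le {α : Type*} [LinearOrder α] (c : κ → α)
    {s : Finset κ} {n : ℕ} (hn : n ≤ s.card) :
    ∃ t ⊆ s, t.card = n ∧ ∀ x ∈ t, ∀ z ∈ s \ t, c z ≤ c x := by
  induction n with
  | zero => exact ⟨∅, empty_subset s, card_empty, by simp⟩
  | succ n ih =>
    obtain ⟨t, hts, rfl, htop⟩ := ih (Nat.le_of_succ_le hn)
    have hne : (s \ t).Nonempty := by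
      rw [← card_pos, card_sdiff_of_subset hts]; omega
    obtain ⟨y, hy, hymax⟩ := exists_max_image (s \ t) c hne
    rw [mem_sdiff] at hy
    refine ⟨insert y t, insert_subset hy.1 hts, card_insert_of_notMem hy.2, ?_⟩
    intro x hx z hz
    have hz' : z ∈ s \ t := by
      simp only [mem_sdiff, mem_insert, not_or] at hz ⊢
      exact ⟨hz.1, hz.2.2⟩
    rcases mem_insert.mp hx with rfl | hxt
    · exact hymax z hz'
    · exact htop x hxt z hz'

theorem sum_sdiff_add_card_mul_le_sum {s t : Finset κ} {c : κ → ℕ} (hts : t ⊆ s)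
    (htop : ∀ x ∈ t, ∀ z ∈ s \ t, c z ≤ c x) {k : ℕ}
    (hk : (s \ t).card * k < ∑ z ∈ s \ t, c z) :
    ∑ z ∈ s \ t, c z + t.card * (k + 1) ≤ ∑ z ∈ s, c z := by
  obtain ⟨y, hy, hky⟩ : ∃ y ∈ s \ t, k < c y :=
    exists_lt_of_sum_lt (by simpa [mul_comm] using hk)
  have ht : t.card • (k + 1) ≤ ∑ x ∈ t, c x :=
    card_nsmul_le_sum t c (k + 1) fun x hx => hky.trans_le (htop x hx y hy)
  rw [smul_eq_mul] at ht
  rw [← sum_sdiff hts]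
  omega

end Finset

namespace Multiset

variable {κ : Type*} [DecidableEq κ]

theorem sum_sdiff_count_eq_card_filter_notMem (N : Multiset κ) {s : Finset κ} (hN : ∀ y ∈ N, y ∈ s)
    (t : Finset κ) : ∑ y ∈ s \ t, N.count y = card (N.filter (· ∉ t)) := by
  rw [← sum_count_eq_card (s := s \ t)]
  · refine Finset.sum_congr rfl fun y hy => ?_
    exact (count_filter_of_pos (p := (· ∉ t)) (Finset.mem_sdiff.mp hy).2).symm
  · intro y hy
    rw [mem_filter] at hy
    exact Finset.mem_sdiff.mpr ⟨hN y hy.1, hy.2⟩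

theorem exists_card_filter_notMem_le (N : Multiset κ) {s : Finset κ} (hN : ∀ y ∈ N, y ∈ s)
    {f₁ f₂ : ℕ} (hf₂ : f₂ ≤ s.card) (hcard : card N ≤ f₁ + f₂ * (f₁ / (s.card - f₂) + 1)) :
    ∃ t ⊆ s, t.card = f₂ ∧ card (N.filter (· ∉ t)) ≤ f₁ := by
  obtain ⟨t, hts, htcard, htop⟩ :=
    Finset.exists_subset_card_eq_forall_sdiff_le (fun y => N.count y) hf₂
  refine ⟨t, hts, htcard, ?_⟩
  by_contra! hlarge
  have hsdiff : (s \ t).card = s.card - f₂ := by rw [Finset.card_sdiff_of_subset hts, htcard]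
  have hk : (s \ t).card * (f₁ / (s.card - f₂)) < ∑ y ∈ s \ t, N.count y := by
    rw [hsdiff, sum_sdiff_count_eq_card_filter_notMem N hN]
    exact (Nat.mul_div_le f₁ _).trans_lt hlarge
  have hsum := Finset.sum_sdiff_add_card_mul_le_sum hts htop hk
  rw [sum_sdiff_count_eq_card_filter_notMem N hN, sum_count_eq_card hN, htcard] at hsum
  omega

end Multiset

theorem exists_senders_cover {ι κ : Type*} [DecidableEq ι] [DecidableEq κ]
    (M : Multiset (ι × κ)) (t : Finset κ) :
    ∃ F : Finset ι, (∀ x ∈ F, ∃ p ∈ M, p.1 = x) ∧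
      F.card ≤ Multiset.card ((M.map Prod.snd).filter (· ∉ t)) ∧ ∀ p ∈ M, p.2 ∈ t ∨ p.1 ∈ F := by
  refine ⟨((M.filter (·.2 ∉ t)).map Prod.fst).toFinset, ?_, ?_, ?_⟩
  · intro x hx
    obtain ⟨p, hp, rfl⟩ := Multiset.mem_map.mp (Multiset.mem_toFinset.mp hx)
    exact ⟨p, Multiset.mem_of_mem_filter hp, rfl⟩
  · rw [Multiset.filter_map, Multiset.card_map]
    exact (Multiset.toFinset_card_le _).trans (Multiset.card_map _ _).le
  · intro p hp
    by_cases hpt : p.2 ∈ t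
    · exact Or.inl hpt
    · exact Or.inr (Multiset.mem_toFinset.mpr
        (Multiset.mem_map_of_mem _ (Multiset.mem_filter.mpr ⟨hp, hpt⟩)))

theorem stmt_12_general {ι κ : Type*}
    (f₁ f₂ nf₂ n₂ : ℕ) (hn₂ : n₂ = f₂ + nf₂)
    (q r σ₁ : ℕ) (hq : q = (f₁ + 1) / nf₂) (hr : r = (f₁ + 1) % nf₂)
    (hσ : σ₁ = q * n₂ + r + f₂ * (if 0 < r then 1 else 0))
    (C₁ : Finset ι) (C₂ : Finset κ) (hC₂ : C₂.card = n₂)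
    (M : Multiset (ι × κ)) (hM : ∀ p ∈ M, p.1 ∈ C₁ ∧ p.2 ∈ C₂)
    (hcard : Multiset.card M = σ₁ - 1) :
    ∃ (F₂ : Finset κ) (F₁ : Finset ι), F₂ ⊆ C₂ ∧ F₂.card = f₂ ∧
      F₁ ⊆ C₁ ∧ F₁.card ≤ f₁ ∧ ∀ p ∈ M, p.2 ∈ F₂ ∨ p.1 ∈ F₁ := by
  classical
  have hσ₁ : σ₁ = f₁ + 1 + f₂ * (f₁ / nf₂ + 1) :=
    calc σ₁ = (nf₂ * q + r) + f₂ * (q + if 0 < r then 1 else 0) := by rw [hσ, hn₂]; ring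
      _ = f₁ + 1 + f₂ * (f₁ / nf₂ + 1) := by
        rw [hq, hr, Nat.div_add_mod, Nat.succ_div_add_ite_mod_pos]
  have hreceivers : ∀ y ∈ M.map Prod.snd, y ∈ C₂ := by
    intro y hy
    obtain ⟨p, hp, rfl⟩ := Multiset.mem_map.mp hy
    exact (hM p hp).2
  obtain ⟨F₂, hF₂C₂, hF₂card, hsurvivors⟩ :=
    (M.map Prod.snd).exists_card_filter_notMem_le hreceivers (f₁ := f₁) (f₂ := f₂) (by omega)
      (by rw [Multiset.card_map, hcard, hσ₁, hC₂, hn₂, Nat.add_sub_cancel_left]; omega)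
  obtain ⟨F₁, hF₁M, hF₁card, hcover⟩ := exists_senders_cover M F₂
  refine ⟨F₂, F₁, hF₂C₂, hF₂card, fun x hx => ?_, hF₁card.trans hsurvivors, hcover⟩
  obtain ⟨p, hp, rfl⟩ := hF₁M x hx
  exact (hM p hp).1

/-- adversarial covering at the heart of Theorem 4.1. -/
theorem stmt_12 {ι κ : Type*} [DecidableEq ι] [DecidableEq κ]
    (f₁ nf₁ f₂ nf₂ n₁ n₂ : ℕ) (hn₁ : n₁ = f₁ + nf₁) (hn₂ : n₂ = f₂ + nf₂)
    (hnf₂ : 1 ≤ nf₂) (hsize : n₂ ≤ n₁)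
    (q r σ₁ : ℕ) (hq : q = (f₁ + 1) / nf₂) (hr : r = (f₁ + 1) % nf₂)
    (hσ : σ₁ = q * n₂ + r + f₂ * (if 0 < r then 1 else 0))
    (C₁ : Finset ι) (C₂ : Finset κ) (hC₁ : C₁.card = n₁) (hC₂ : C₂.card = n₂)
    (M : Multiset (ι × κ)) (hM : ∀ p ∈ M, p.1 ∈ C₁ ∧ p.2 ∈ C₂)
    (hcard : Multiset.card M = σ₁ - 1) :
    ∃ (F₂ : Finset κ) (F₁ : Finset ι), F₂ ⊆ C₂ ∧ F₂.card = f₂ ∧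
      F₁ ⊆ C₁ ∧ F₁.card ≤ f₁ ∧ ∀ p ∈ M, p.2 ∈ F₂ ∨ p.1 ∈ F₁ :=
  stmt_12_general f₁ f₂ nf₂ n₂ hn₂ q r σ₁ hq hr hσ C₁ C₂ hC₂ M hM hcard
end

section
/- Let nf₂ ≥ 1, f₁, f₂ ≥ 0, q = (2·f₁+1)/nf₂, r = (2·f₁+1) mod nf₂, and τ₁ = q·(f₂+nf₂) + r + f₂·sgn(r). For every multiset C of certificates, each with a receiver among the f₂+nf₂ receivers, with |C| = τ₁ − 1, if F₂ denotes a set of f₂ top receivers (each receiving at least as many certificates as any receiver outside F₂), then the number of certificates received outside F₂ is at most 2·f₁; consequently these can be split into two groups each signed by at most f₁ distinct senders. -/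
/-!
Write `m = 2 f₁ + 1` and `n = nf₂`; then `q + sgn r = ⌈m / n⌉` and `τ₁ = f₂ ⌈m / n⌉ + m`.
If at least `m` certificates went to the `n` receivers outside `F₂`, one of them received at
least `⌈m / n⌉` (pigeonhole), hence so did each of the `f₂` top receivers, and there would be at
least `τ₁` certificates in total. So at most `2 f₁` remain; split into two halves of at most `f₁`
certificates, each half has at most `f₁` senders.
-/

open Finset

theorem Nat.div_add_ite_mod_pos_eq_ceilDiv {m n : ℕ} (hn : 0 < n) :
    m / n + (if 0 < m % n then 1 else 0) = m ⌈/⌉ n := by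
  rw [Nat.ceilDiv_eq_add_pred_div, eq_comm]
  have hdm := Nat.div_add_mod m n
  have hmod := Nat.mod_lt m hn
  apply Nat.div_eq_of_lt_le <;> split_ifs <;> grind

theorem Finset.exists_ceilDiv_le_of_le_sum {ι : Type*} {t : Finset ι} {a : ι → ℕ} {m : ℕ}
    (hm : 0 < m) (h : m ≤ ∑ i ∈ t, a i) : ∃ i ∈ t, m ⌈/⌉ #t ≤ a i := by
  have ht : 0 < #t := Finset.card_pos.2 <| Finset.nonempty_of_sum_ne_zero (f := a) (by omega)
  have hk : ¬ m ⌈/⌉ #t ≤ 0 := by rw [ceilDiv_le_iff_le_mul ht]; omega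
  obtain ⟨i, hi, hlt⟩ : ∃ i ∈ t, m ⌈/⌉ #t - 1 < a i := by
    refine Finset.exists_lt_of_sum_lt (lt_of_lt_of_le ?_ h)
    rw [Finset.sum_const, smul_eq_mul, ← not_le, ← ceilDiv_le_iff_le_mul ht]
    omega
  exact ⟨i, hi, by omega⟩

theorem Finset.sum_sdiff_lt_of_sum_lt_of_forall_le {κ : Type*} [DecidableEq κ] {a : κ → ℕ}
    {F R : Finset κ} {m : ℕ} (hFR : F ⊆ R) (hm : 0 < m)
    (htop : ∀ x ∈ F, ∀ y ∈ R \ F, a y ≤ a x)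
    (hsum : ∑ i ∈ R, a i < #F * (m ⌈/⌉ #(R \ F)) + m) : ∑ i ∈ R \ F, a i < m := by
  by_contra! hout
  obtain ⟨y, hy, hky⟩ := Finset.exists_ceilDiv_le_of_le_sum hm hout
  have hF : #F * (m ⌈/⌉ #(R \ F)) ≤ ∑ x ∈ F, a x :=
    Finset.card_nsmul_le_sum _ _ _ fun x hx => hky.trans (htop x hx y hy)
  rw [← Finset.sum_sdiff hFR] at hsum
  omega

theorem Multiset.card_filter_notMem_eq_sum_count {α : Type*} [DecidableEq α] {s : Multiset α}
    {t : Finset α} (u : Finset α) (hs : ∀ a ∈ s, a ∈ t) :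
    card (s.filter (· ∉ u)) = ∑ a ∈ t \ u, s.count a := by
  rw [← Multiset.sum_count_eq_card (s := t \ u)]
  · refine Finset.sum_congr rfl fun a ha => Multiset.count_filter_of_pos (Finset.mem_sdiff.1 ha).2
  · intro a ha
    rw [Multiset.mem_filter] at ha
    exact Finset.mem_sdiff.2 ⟨hs a ha.1, ha.2⟩

theorem Multiset.exists_add_eq_card_le_of_card_le_add {α : Type*} (D : Multiset α) {a b : ℕ}
    (h : card D ≤ a + b) : ∃ A B : Multiset α, A + B = D ∧ card A ≤ a ∧ card B ≤ b := by
  refine ⟨D.toList.take a, D.toList.drop a, ?_, by simp, ?_⟩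
  · rw [Multiset.coe_add, List.take_append_drop, Multiset.coe_toList]
  · simp only [Multiset.coe_card, List.length_drop, Multiset.length_toList]
    omega

/-- counting core of Theorem 4.2(1). -/
theorem stmt_13 {σ κ : Type*} [DecidableEq σ] [DecidableEq κ]
    (f₁ f₂ nf₂ : ℕ) (hnf : 1 ≤ nf₂)
    (q r τ₁ : ℕ) (hq : q = (2 * f₁ + 1) / nf₂) (hr : r = (2 * f₁ + 1) % nf₂)
    (hτ : τ₁ = q * (f₂ + nf₂) + r + f₂ * (if 0 < r then 1 else 0))
    (Rcv : Finset κ) (hRcv : Rcv.card = f₂ + nf₂)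
    (F₂ : Finset κ) (hF₂ : F₂ ⊆ Rcv) (hf₂ : F₂.card = f₂)
    (C : Multiset (σ × κ)) (hC : ∀ p ∈ C, p.2 ∈ Rcv)
    (hcard : Multiset.card C = τ₁ - 1)
    (htop : ∀ x ∈ F₂, ∀ y ∈ Rcv \ F₂,
      (C.map Prod.snd).count y ≤ (C.map Prod.snd).count x) :
    Multiset.card (C.filter (fun p => p.2 ∉ F₂)) ≤ 2 * f₁ ∧
      ∃ C₁' C₂' : Multiset (σ × κ), C₁' + C₂' = C.filter (fun p => p.2 ∉ F₂) ∧
        (C₁'.map Prod.fst).toFinset.card ≤ f₁ ∧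
        (C₂'.map Prod.fst).toFinset.card ≤ f₁ := by
  have hrcv : ∀ y ∈ C.map Prod.snd, y ∈ Rcv := by
    simpa only [Multiset.mem_map, forall_exists_index, and_imp, forall_apply_eq_imp_iff₂] using hC
  have hout : #(Rcv \ F₂) = nf₂ := by rw [Finset.card_sdiff_of_subset hF₂]; omega
  have hdm : nf₂ * q + r = 2 * f₁ + 1 := hq ▸ hr ▸ Nat.div_add_mod _ _
  have hceil : q + (if 0 < r then 1 else 0) = (2 * f₁ + 1) ⌈/⌉ nf₂ :=
    hq ▸ hr ▸ Nat.div_add_ite_mod_pos_eq_ceilDiv hnf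
  have hτ₁ : τ₁ = f₂ * ((2 * f₁ + 1) ⌈/⌉ nf₂) + (2 * f₁ + 1) := by
    rw [hτ, ← hceil, ← hdm]
    ring
  have hfilter : Multiset.card (C.filter (fun p => p.2 ∉ F₂)) =
      ∑ y ∈ Rcv \ F₂, (C.map Prod.snd).count y := by
    rw [← Multiset.card_filter_notMem_eq_sum_count F₂ hrcv, Multiset.filter_map,
      Multiset.card_map]
    rfl
  have hlt := Finset.sum_sdiff_lt_of_sum_lt_of_forall_le hF₂ (m := 2 * f₁ + 1) (by omega) htop
    (by rw [hout, hf₂, Multiset.sum_count_eq_card hrcv, Multiset.card_map]; omega)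
  have hsmall : Multiset.card (C.filter (fun p => p.2 ∉ F₂)) ≤ f₁ + f₁ := by omega
  obtain ⟨A, B, hAB, hA, hB⟩ := Multiset.exists_add_eq_card_le_of_card_le_add _ hsmall
  refine ⟨by omega, A, B, hAB, ?_, ?_⟩
  · exact (Multiset.toFinset_card_le _).trans ((Multiset.card_map _ _).trans_le hA)
  · exact (Multiset.toFinset_card_le _).trans ((Multiset.card_map _ _).trans_le hB)
end

section
/- Let f₁, f₂, nf₁ be naturals with nf₁ > f₁, q = (f₂+1)/(nf₁ − f₁), r = (f₂+1) mod (nf₁ − f₁), τ₂ = q·(f₁+nf₁) + r + 2·f₁·sgn(r). For any multiset C of certificates with signers among the f₁+nf₁ senders and |C| = τ₂ − 1, let R be a set of 2·f₁ top signers (each signing at least as many certificates in C as any signer outside R). Then the number of certificates signed outside R is at most f₂, and R can be partitioned into two sets of f₁ signers each. -/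
/-!
Let `d = nf₁ - f₁` be the number of signers outside `R`, so that `q + sgn r = ⌈(f₂ + 1) / d⌉`
and `τ₂ = f₂ + 1 + 2 f₁ ⌈(f₂ + 1) / d⌉`. If more than `f₂` certificates were signed outside `R`,
by pigeonhole some outsider would sign at least `⌈(f₂ + 1) / d⌉` of them; every top signer then
signs at least as many, so `C` would hold at least `τ₂` certificates.
-/

open Finset Multiset

theorem Finset.exists_disjoint_union_eq_card_eq {α : Type*} [DecidableEq α] {s : Finset α}
    {m n : ℕ} (hs : s.card = m + n) :
    ∃ s₁ s₂ : Finset α, Disjoint s₁ s₂ ∧ s₁ ∪ s₂ = s ∧ s₁.card = m ∧ s₂.card = n := by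
  obtain ⟨s₁, hsub, hcard⟩ := s.exists_subset_card_eq (n := m) (by omega)
  refine ⟨s₁, s \ s₁, disjoint_sdiff, union_sdiff_of_subset hsub, hcard, ?_⟩
  rw [card_sdiff_of_subset hsub]
  omega

theorem Nat.div_add_one_eq_succ_div_add_ite (n d : ℕ) :
    n / d + 1 = (n + 1) / d + if 0 < (n + 1) % d then 1 else 0 := by
  rw [Nat.succ_div]
  by_cases h : d ∣ n + 1
  · simp [h, Nat.mod_eq_zero_of_dvd h]
  · simp [h, Nat.pos_of_ne_zero (mt Nat.dvd_of_mod_eq_zero h)]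

theorem Multiset.exists_lt_count_of_card_mul_lt_card {α : Type*} [DecidableEq α]
    {s : Finset α} {m : Multiset α} {b : ℕ} (hm : ∀ a ∈ m, a ∈ s)
    (h : s.card * b < Multiset.card m) : ∃ a ∈ s, b < m.count a :=
  exists_lt_of_sum_lt (by simpa [sum_count_eq_card hm] using h)

theorem Multiset.card_filter_mem_eq_sum_count_s14 {α : Type*} [DecidableEq α]
    (s : Finset α) (m : Multiset α) :
    Multiset.card (m.filter (· ∈ s)) = ∑ a ∈ s, m.count a := by
  rw [← sum_count_eq_card (s := s) (fun a ha => (Multiset.mem_filter.mp ha).2)]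
  exact Finset.sum_congr rfl fun a ha => count_filter_of_pos ha

section TopSigners

variable {σ : Type*} [DecidableEq σ] {S R : Finset σ} {C : Multiset σ}

theorem card_filter_not_mem_add_card_mul_le_card (hC : ∀ x ∈ C, x ∈ S)
    (htop : ∀ x ∈ R, ∀ y ∈ S \ R, C.count y ≤ C.count x) {b : ℕ}
    (hb : (S \ R).card * b < Multiset.card (C.filter (· ∉ R))) :
    Multiset.card (C.filter (· ∉ R)) + R.card * (b + 1) ≤ Multiset.card C := by
  obtain ⟨y, hy, hby⟩ := exists_lt_count_of_card_mul_lt_card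
    (fun x hx => Finset.mem_sdiff.mpr
      ⟨hC x (Multiset.mem_filter.mp hx).1, (Multiset.mem_filter.mp hx).2⟩) hb
  have hR : ∀ x ∈ R, b + 1 ≤ C.count x := fun x hx =>
    (hby.trans_le (count_le_of_le y (filter_le _ _))).trans_le (htop x hx y hy)
  have hsplit := congrArg Multiset.card (filter_add_not (· ∈ R) C)
  rw [Multiset.card_add, card_filter_mem_eq_sum_count_s14] at hsplit
  have hsum := card_nsmul_le_sum R (C.count ·) (b + 1) hR
  rw [smul_eq_mul] at hsum
  omega

end TopSigners

theorem stmt_14_general {σ : Type*} [DecidableEq σ]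
    (f₁ f₂ nf₁ : ℕ)
    (q r τ₂ : ℕ) (hq : q = (f₂ + 1) / (nf₁ - f₁)) (hr : r = (f₂ + 1) % (nf₁ - f₁))
    (hτ : τ₂ = q * (f₁ + nf₁) + r + 2 * f₁ * (if 0 < r then 1 else 0))
    (Sgn : Finset σ) (hSgn : Sgn.card = f₁ + nf₁)
    (R : Finset σ) (hR : R ⊆ Sgn) (hRcard : R.card = 2 * f₁)
    (C : Multiset σ) (hC : ∀ x ∈ C, x ∈ Sgn)
    (hcard : Multiset.card C = τ₂ - 1)
    (htop : ∀ x ∈ R, ∀ y ∈ Sgn \ R, C.count y ≤ C.count x) :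
    Multiset.card (C.filter (· ∉ R)) ≤ f₂ ∧
      ∃ R₁ R₂ : Finset σ, Disjoint R₁ R₂ ∧ R₁ ∪ R₂ = R ∧
        R₁.card = f₁ ∧ R₂.card = f₁ := by
  refine ⟨?_, Finset.exists_disjoint_union_eq_card_eq (by omega)⟩
  set d := nf₁ - f₁
  have hRS := Finset.card_le_card hR
  have hout : (Sgn \ R).card = d := by rw [card_sdiff_of_subset hR]; omega
  have hceil : f₂ / d + 1 = q + if 0 < r then 1 else 0 := by
    rw [hq, hr]; exact Nat.div_add_one_eq_succ_div_add_ite f₂ d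
  have hτ' : τ₂ = f₂ + 1 + 2 * f₁ * (f₂ / d + 1) := by
    have hnf : nf₁ = f₁ + d := by omega
    have hqr : d * q + r = f₂ + 1 := hq ▸ hr ▸ Nat.div_add_mod (f₂ + 1) d
    rw [hτ, hceil, hnf]
    linarith
  by_contra! hbig
  have hcount := card_filter_not_mem_add_card_mul_le_card hC htop (b := f₂ / d)
    (by rw [hout]; linarith [Nat.mul_div_le f₂ d])
  rw [hRcard] at hcount
  omega

/-- counting core of Theorem 4.2(2). -/
theorem stmt_14 {σ : Type*} [DecidableEq σ]
    (f₁ f₂ nf₁ : ℕ) (hnf : f₁ < nf₁)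
    (q r τ₂ : ℕ) (hq : q = (f₂ + 1) / (nf₁ - f₁)) (hr : r = (f₂ + 1) % (nf₁ - f₁))
    (hτ : τ₂ = q * (f₁ + nf₁) + r + 2 * f₁ * (if 0 < r then 1 else 0))
    (Sgn : Finset σ) (hSgn : Sgn.card = f₁ + nf₁)
    (R : Finset σ) (hR : R ⊆ Sgn) (hRcard : R.card = 2 * f₁)
    (C : Multiset σ) (hC : ∀ x ∈ C, x ∈ Sgn)
    (hcard : Multiset.card C = τ₂ - 1)
    (htop : ∀ x ∈ R, ∀ y ∈ Sgn \ R, C.count y ≤ C.count x) :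
    Multiset.card (C.filter (· ∉ R)) ≤ f₂ ∧
      ∃ R₁ R₂ : Finset σ, Disjoint R₁ R₂ ∧ R₁ ∪ R₂ = R ∧
        R₁.card = f₁ ∧ R₂.card = f₁ :=
  stmt_14_general f₁ f₂ nf₁ q r τ₂ hq hr hτ Sgn hSgn R hR hRcard C hC hcard htop
end

section
/- Let f₂, nf₂ be naturals with nf₂ ≥ 1, n₂ = f₂ + nf₂ ≥ 3·f₂ + 1, and f₁ with n₁ = f₁ + nf₁ ≥ 3·f₁ + 1 and n₁ ≥ n₂. Let q = (f₁+1)/nf₂, r = (f₁+1) mod nf₂, σ₁ = q·n₂ + r + f₂·sgn(r). Then σ₁ ≤ n₁, i.e., the crash-failure lower bound never exceeds the size of the larger cluster when both clusters satisfy n > 3f. -/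
/-!
Write `f₁ + 1 = q * nf₂ + r` with `r < nf₂`. If `q = 0`, then `σ₁ ≤ r + f₂ < n₂ ≤ n₁`.
If `q ≥ 1`, resilience of the receiving cluster, `nf₂ ≥ 2 f₂ + 1`, gives
`(q + 1) f₂ + 2 ≤ 2 q nf₂`, hence `σ₁ ≤ 3 (f₁ + 1) - 2 = 3 f₁ + 1 ≤ n₁`.
-/

/-- The paper's `σ₁`, with `n = n₂`, `f = f₂`, and `q`, `r` the quotient and remainder of
`f₁ + 1` by `nf₂`. -/
def crashLowerBound (q r n f : ℕ) : ℕ :=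
  q * n + r + f * if 0 < r then 1 else 0

lemma crashLowerBound_le (q r n f : ℕ) : crashLowerBound q r n f ≤ q * n + r + f := by
  unfold crashLowerBound
  split_ifs <;> simp

lemma crashLowerBound_zero_le {r f nf : ℕ} (hr : r < nf) :
    crashLowerBound 0 r (f + nf) f ≤ f + nf := by
  have := crashLowerBound_le 0 r (f + nf) f
  omega

lemma crashLowerBound_add_two_le {q r f nf : ℕ} (hq : 1 ≤ q) (hres : 2 * f + 1 ≤ nf) :
    crashLowerBound q r (f + nf) f + 2 ≤ 3 * (q * nf + r) := by
  have hblocks : (q + 1) * f + 2 ≤ 2 * q * nf :=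
    calc (q + 1) * f + 2 ≤ 2 * q * (2 * f + 1) := by nlinarith
      _ ≤ 2 * q * nf := Nat.mul_le_mul_left _ hres
  have := crashLowerBound_le q r (f + nf) f
  nlinarith

theorem stmt_18_general (f₁ f₂ nf₂ n₁ n₂ : ℕ)
    (hn₂ : n₂ = f₂ + nf₂) (h₂ : 3 * f₂ + 1 ≤ n₂)
    (h₁ : 3 * f₁ + 1 ≤ n₁) (hsize : n₂ ≤ n₁)
    (q r σ₁ : ℕ) (hq : q = (f₁ + 1) / nf₂) (hr : r = (f₁ + 1) % nf₂)
    (hσ : σ₁ = q * n₂ + r + f₂ * (if 0 < r then 1 else 0)) :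
    σ₁ ≤ n₁ := by
  have hres : 2 * f₂ + 1 ≤ nf₂ := by omega
  have hdiv : q * nf₂ + r = f₁ + 1 := by rw [hq, hr]; exact Nat.div_add_mod' _ _
  have hrlt : r < nf₂ := hr ▸ Nat.mod_lt _ (by omega)
  change σ₁ = crashLowerBound q r n₂ f₂ at hσ
  subst hσ hn₂
  rcases Nat.eq_zero_or_pos q with rfl | hqpos
  · exact (crashLowerBound_zero_le hrlt).trans hsize
  · have := crashLowerBound_add_two_le (r := r) hqpos hres
    omega

/-- feasibility of SPBS-(σ₁, bcs) under n > 3f. -/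
theorem stmt_18 (f₁ nf₁ f₂ nf₂ n₁ n₂ : ℕ) (hnf₂ : 1 ≤ nf₂)
    (hn₂ : n₂ = f₂ + nf₂) (h₂ : 3 * f₂ + 1 ≤ n₂)
    (hn₁ : n₁ = f₁ + nf₁) (h₁ : 3 * f₁ + 1 ≤ n₁) (hsize : n₂ ≤ n₁)
    (q r σ₁ : ℕ) (hq : q = (f₁ + 1) / nf₂) (hr : r = (f₁ + 1) % nf₂)
    (hσ : σ₁ = q * n₂ + r + f₂ * (if 0 < r then 1 else 0)) :
    σ₁ ≤ n₁ :=
  stmt_18_general f₁ f₂ nf₂ n₁ n₂ hn₂ h₂ h₁ hsize q r σ₁ hq hr hσ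
end

section
/- Let n₂ = f₂ + nf₂ with nf₂ ≥ 1 and n₂ > 3·f₂, and n₁ = f₁ + nf₁ with n₁ > 3·f₁ and n₂ ≥ n₁. Let q = (f₂+1)/nf₁ with nf₁ ≥ 1, r = (f₂+1) mod nf₁, σ₂ = q·n₁ + r + f₁·sgn(r). Then σ₂ ≤ n₂. -/
/-!
Write `m = f₂ + 1` and `d = nf₁`. Splitting `m = q d + r`, the sum is
`σ₂ = q (f₁ + d) + r + f₁ sgn r = m + c f₁` with `c = ⌈m / d⌉`, and `c d ≤ m + d - 1`.
Since `n₁ > 3 f₁` means `2 f₁ < d`, this gives `2 c f₁ < m + d`; together with `n₁ ≤ n₂` and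
`2 f₂ < nf₂` (from `n₂ > 3 f₂`) it yields `c f₁ < nf₂`, i.e. `σ₂ ≤ f₂ + nf₂ = n₂`.
-/

namespace Nat

lemma div_add_sgn_mod_eq_ceilDiv (m : ℕ) {d : ℕ} (hd : 0 < d) :
    m / d + (if 0 < m % d then 1 else 0) = m ⌈/⌉ d := by
  have hr : m % d < d := Nat.mod_lt m hd
  rw [Nat.ceilDiv_eq_add_pred_div, eq_comm]
  conv_lhs => rw [← Nat.div_add_mod m d]
  generalize m / d = q, m % d = r at hr ⊢
  apply Nat.div_eq_of_lt_le <;>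
    split_ifs <;> simp only [add_zero, Nat.succ_mul, Nat.mul_comm d q] <;> omega

lemma ceilDiv_mul_le (m d : ℕ) : m ⌈/⌉ d * d ≤ m + d - 1 := Nat.div_mul_le_self _ _

end Nat

lemma div_mul_add_mod_add_sgn_mod (m f : ℕ) {d : ℕ} (hd : 0 < d) :
    m / d * (f + d) + m % d + f * (if 0 < m % d then 1 else 0) = m + m ⌈/⌉ d * f := by
  rw [← Nat.div_add_sgn_mod_eq_ceilDiv m hd]
  generalize (if 0 < m % d then 1 else 0) = s
  have hm := Nat.div_add_mod m d
  generalize m / d = q, m % d = r at hm ⊢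
  subst hm
  ring

lemma two_mul_ceilDiv_mul_add_le {m f d : ℕ} (hfd : 2 * f < d) :
    2 * (m ⌈/⌉ d * f) + m ⌈/⌉ d ≤ m + d - 1 :=
  calc 2 * (m ⌈/⌉ d * f) + m ⌈/⌉ d = m ⌈/⌉ d * (2 * f + 1) := by ring
    _ ≤ m ⌈/⌉ d * d := Nat.mul_le_mul_left _ hfd
    _ ≤ m + d - 1 := Nat.ceilDiv_mul_le m d

theorem stmt_19_general (f₁ nf₁ f₂ nf₂ n₁ n₂ : ℕ) (hnf₁ : 1 ≤ nf₁)
    (hn₂ : n₂ = f₂ + nf₂) (h₂ : 3 * f₂ < n₂)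
    (hn₁ : n₁ = f₁ + nf₁) (h₁ : 3 * f₁ < n₁) (hsize : n₁ ≤ n₂)
    (q r σ₂ : ℕ) (hq : q = (f₂ + 1) / nf₁) (hr : r = (f₂ + 1) % nf₁)
    (hσ : σ₂ = q * n₁ + r + f₁ * (if 0 < r then 1 else 0)) :
    σ₂ ≤ n₂ := by
  subst hn₁ hn₂
  rw [hσ, hq, hr, div_mul_add_mod_add_sgn_mod _ _ hnf₁]
  have hc := two_mul_ceilDiv_mul_add_le (m := f₂ + 1) (show 2 * f₁ < nf₁ by omega)
  omega

/-- feasibility of RPBS-(σ₂, bcs) under n > 3f. -/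
theorem stmt_19 (f₁ nf₁ f₂ nf₂ n₁ n₂ : ℕ) (hnf₂ : 1 ≤ nf₂) (hnf₁ : 1 ≤ nf₁)
    (hn₂ : n₂ = f₂ + nf₂) (h₂ : 3 * f₂ < n₂)
    (hn₁ : n₁ = f₁ + nf₁) (h₁ : 3 * f₁ < n₁) (hsize : n₁ ≤ n₂)
    (q r σ₂ : ℕ) (hq : q = (f₂ + 1) / nf₁) (hr : r = (f₂ + 1) % nf₁)
    (hσ : σ₂ = q * n₁ + r + f₁ * (if 0 < r then 1 else 0)) :
    σ₂ ≤ n₂ :=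
  stmt_19_general f₁ nf₁ f₂ nf₂ n₁ n₂ hnf₁ hn₂ h₂ hn₁ h₁ hsize q r σ₂ hq hr hσ
end
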